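/- Let G be a unicyclic graph whose unique cycle C* has vertex set containing the set V⁺ of vertices of degree at least 3 on C*, and let l be the number of leaves of G. Let e = uv be an edge of C* and G' = G \ {e}. Then meg(G') = l if u, v ∈ V⁺; meg(G') = l + 1 if exactly one of u, v lies in V⁺; and meg(G') = l + 2 if neither u nor v lies in V⁺. -/

import Mathlib

open SimpleGraph

variable {V : Type*}

/-- A pair of vertices `u, v` monitors edge `e` in `G` if `u` and `v` are connected
and `e` lies on every shortest path (walk of length `G.dist u v`) between them. -/
def monitors (G : SimpleGraph V) (u v : V) (e : Sym2 V) : Prop :=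
  G.Reachable u v ∧ ∀ p : G.Walk u v, p.length = G.dist u v → e ∈ p.edges

/-- `M` is a monitoring edge-geodetic set of `G`. -/
def IsMEGSet (G : SimpleGraph V) (M : Set V) : Prop :=
  ∀ e ∈ G.edgeSet, ∃ u ∈ M, ∃ v ∈ M, monitors G u v e

/-- The monitoring edge-geodetic number: minimum size of an MEG-set. -/
noncomputable def meg (G : SimpleGraph V) : ℕ :=
  sInf {n | ∃ M : Finset V, IsMEGSet G ↑M ∧ M.card = n}

/-!
Deleting an edge of the cycle of a connected unicyclic graph leaves a tree. In a finite forest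
the leaves form the unique minimum MEG-set: a leaf is never an inner vertex of a path, so it lies
in every MEG-set; and every edge lies on a longest path through it, whose ends are leaves and
which, being the only path between its ends, is contained in every walk between them. Deleting
`uv` lowers the degrees of `u` and `v` by one and no other degree, and both are at least `2`
since the tree is nontrivial, so `u` (resp. `v`) becomes a new leaf exactly when its degree
was `2`.
-/

namespace SimpleGraph

variable {G : SimpleGraph V}

lemma Walk.IsPath.one_lt_degree_of_mem_support {a b z : V} {p : G.Walk a b} (hp : p.IsPath)
    (hz : z ∈ p.support) (ha : z ≠ a) (hb : z ≠ b) [Fintype (G.neighborSet z)] :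
    1 < G.degree z := by
  obtain ⟨q, r, -, -, rfl⟩ := hp.mem_support_iff_exists_append.mp hz
  have hq : ¬q.Nil := fun h => ha h.eq.symm
  have hr : ¬r.Nil := fun h => hb h.eq
  have hne : q.penultimate ≠ r.snd :=
    hp.ne_of_mem_support_of_append (r.adj_snd hr).ne' (q.getVert_mem_support _)
      (r.getVert_mem_support _)
  rw [← card_neighborFinset_eq_degree]
  exact Finset.one_lt_card.mpr ⟨q.penultimate, by simpa using (q.adj_penultimate hq).symm,
    r.snd, by simpa using r.adj_snd hr, hne⟩

lemma exists_isPath_mem_edges_forall_length_le [Finite G.edgeSet] {a b : V} (hab : G.Adj a b) :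
    ∃ (x y : V) (p : G.Walk x y), p.IsPath ∧ s(a, b) ∈ p.edges ∧
      ∀ (x' y' : V) (p' : G.Walk x' y'), p'.IsPath → s(a, b) ∈ p'.edges →
        p'.length ≤ p.length := by
  have := Fintype.ofFinite G.edgeSet
  let lengths :=
    {n | ∃ (x y : V) (p : G.Walk x y), p.IsPath ∧ s(a, b) ∈ p.edges ∧ p.length = n}
  have hfin : lengths.Finite := (Set.finite_le_nat G.edgeFinset.card).subset
    fun _ ⟨_, _, _, hp, _, hn⟩ => hn ▸ hp.isTrail.length_le_card_edgeFinset
  obtain ⟨_, ⟨x, y, p, hp, he, rfl⟩, hmax⟩ :=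
    hfin.exists_maximal ⟨1, a, b, _, (Path.singleton hab).2, by simp, rfl⟩
  exact ⟨x, y, p, hp, he, fun x' y' p' hp' he' =>
    le_of_not_gt fun hlt => hlt.not_ge (hmax ⟨x', y', p', hp', he', rfl⟩ hlt.le)⟩

lemma IsAcyclic.degree_eq_one_of_forall_adj_mem_support (hG : G.IsAcyclic) {x y : V}
    {p : G.Walk x y} (hp : p.IsPath) (hnil : ¬p.Nil) (hx : ∀ w, G.Adj x w → w ∈ p.support)
    [Fintype (G.neighborSet x)] : G.degree x = 1 :=
  degree_eq_one_iff_existsUnique_adj.mpr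
    ⟨p.snd, p.adj_snd hnil, fun w hw => hG.eq_snd_of_adj_start hp hw (hx w hw)⟩

lemma IsAcyclic.exists_isPath_mem_edges_degree_eq_one [Fintype V] [DecidableRel G.Adj]
    (hG : G.IsAcyclic) {a b : V} (hab : G.Adj a b) :
    ∃ (x y : V) (p : G.Walk x y), p.IsPath ∧ s(a, b) ∈ p.edges ∧
      G.degree x = 1 ∧ G.degree y = 1 := by
  obtain ⟨x, y, p, hp, he, hmax⟩ := exists_isPath_mem_edges_forall_length_le hab
  have hnil : ¬p.Nil := fun h => by cases h; simp at he
  refine ⟨x, y, p, hp, he, hG.degree_eq_one_of_forall_adj_mem_support hp hnil fun w hw => ?_,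
    hG.degree_eq_one_of_forall_adj_mem_support hp.reverse (by simpa using hnil) fun w hw => ?_⟩
  · by_contra hwp
    have := hmax _ _ _ (hp.cons hwp (h := hw.symm)) (by simp [he])
    simp at this
  · rw [Walk.support_reverse, List.mem_reverse]
    by_contra hwp
    have := hmax _ _ _ (hp.concat hwp hw) (by simp [he])
    simp at this

lemma Connected.isTree_deleteEdges_of_mem_edges_isCycle [Finite V] (hG : G.Connected)
    (hcard : Nat.card G.edgeSet = Nat.card V) {x u v : V} {c : G.Walk x x} (hc : c.IsCycle)
    (he : s(u, v) ∈ c.edges) : (G.deleteEdges {s(u, v)}).IsTree := by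
  refine isTree_iff_connected_and_card.mpr
    ⟨hG.connected_delete_edge_of_not_isBridge fun hb => hb.notMem_edges_of_isCycle hc he, ?_⟩
  rw [edgeSet_deleteEdges, Nat.card_coe_set_eq, Set.ncard_sdiff_singleton_add_one
    (c.edges_subset_edgeSet he) (Set.toFinite _), ← Nat.card_coe_set_eq, hcard]

section DeleteEdge

variable [Fintype V] [DecidableEq V] [DecidableRel G.Adj] {u v : V}

lemma degree_deleteEdges_singleton_of_ne {w : V} (hu : w ≠ u) (hv : w ≠ v) :
    (G.deleteEdges {s(u, v)}).degree w = G.degree w := by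
  simp only [← card_neighborFinset_eq_degree]
  congr 1
  ext z
  simp [hu, hv]

lemma degree_deleteEdges_singleton_left (huv : G.Adj u v) :
    (G.deleteEdges {s(u, v)}).degree u = G.degree u - 1 := by
  rw [← card_neighborFinset_eq_degree, ← card_neighborFinset_eq_degree,
    ← Finset.card_erase_of_mem (mem_neighborFinset _ _ _ |>.mpr huv)]
  congr 1
  ext z
  simp [and_comm, eq_comm, huv.ne]

lemma degree_deleteEdges_singleton_right (huv : G.Adj u v) :
    (G.deleteEdges {s(u, v)}).degree v = G.degree v - 1 := by
  rw [Sym2.eq_swap]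
  exact degree_deleteEdges_singleton_left huv.symm

lemma card_leaves_deleteEdges (huv : G.Adj u v) (hu : 2 ≤ G.degree u) (hv : 2 ≤ G.degree v) :
    (Finset.univ.filter fun w => (G.deleteEdges {s(u, v)}).degree w = 1).card =
      (Finset.univ.filter fun w => G.degree w = 1).card
        + (if 3 ≤ G.degree u then 0 else 1) + (if 3 ≤ G.degree v then 0 else 1) := by
  have hcount : ∀ w, (if (G.deleteEdges {s(u, v)}).degree w = 1 then 1 else 0) =
      (if G.degree w = 1 then 1 else 0) + (if w = u then (if 3 ≤ G.degree u then 0 else 1) else 0)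
        + (if w = v then (if 3 ≤ G.degree v then 0 else 1) else 0) := by
    intro w
    by_cases hwu : w = u
    · subst hwu
      simp only [degree_deleteEdges_singleton_left huv, huv.ne, if_true, if_false]
      split_ifs <;> omega
    by_cases hwv : w = v
    · subst hwv
      simp only [degree_deleteEdges_singleton_right huv, huv.ne', if_true, if_false]
      split_ifs <;> omega
    simp [degree_deleteEdges_singleton_of_ne hwu hwv, hwu, hwv]
  simp only [Finset.card_filter, hcount, Finset.sum_add_distrib, Finset.sum_ite_eq',
    Finset.mem_univ, if_true]

end DeleteEdge

end SimpleGraph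

lemma IsMEGSet.mem_of_degree_eq_one {G : SimpleGraph V} {M : Set V} (hM : IsMEGSet G M) {z : V}
    [Fintype (G.neighborSet z)] (hz : G.degree z = 1) : z ∈ M := by
  obtain ⟨y, hzy⟩ := (G.degree_pos_iff_exists_adj z).mp (by omega)
  obtain ⟨a, ha, b, hb, hreach, hgeod⟩ := hM s(z, y) hzy
  obtain ⟨r, hr, hlen⟩ := hreach.exists_path_of_dist
  have hzr : z ∈ r.support := r.fst_mem_support_of_mem_edges (hgeod r hlen)
  by_contra hzM
  have := hr.one_lt_degree_of_mem_support hzr (by rintro rfl; exact hzM ha)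
    (by rintro rfl; exact hzM hb)
  omega

lemma meg_eq_card_of_forall_subset {G : SimpleGraph V} {M : Finset V} (hM : IsMEGSet G M)
    (hmin : ∀ M' : Finset V, IsMEGSet G M' → M ⊆ M') : meg G = M.card :=
  le_antisymm (Nat.sInf_le ⟨M, hM, rfl⟩)
    (le_csInf ⟨_, M, hM, rfl⟩ fun _ ⟨M', hM', hn⟩ =>
      hn ▸ Finset.card_le_card (hmin M' hM'))

lemma SimpleGraph.IsAcyclic.monitors_of_isPath {G : SimpleGraph V} (hG : G.IsAcyclic) {x y : V}
    {p : G.Walk x y} (hp : p.IsPath) {e : Sym2 V} (he : e ∈ p.edges) : monitors G x y e := by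
  classical
  refine ⟨p.reachable, fun r _ => r.edges_bypass_subset_edges ?_⟩
  have hr : r.bypass = p := congrArg Subtype.val <|
    (hG.subsingleton_path x y).elim ⟨r.bypass, r.bypass_isPath⟩ ⟨p, hp⟩
  rwa [hr]

lemma SimpleGraph.IsAcyclic.isMEGSet_leaves [Fintype V] {G : SimpleGraph V} [DecidableRel G.Adj]
    (hG : G.IsAcyclic) : IsMEGSet G ↑(Finset.univ.filter fun w => G.degree w = 1) := by
  rintro ⟨a, b⟩ hab
  obtain ⟨x, y, p, hp, he, hx, hy⟩ := hG.exists_isPath_mem_edges_degree_eq_one hab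
  exact ⟨x, by simpa using hx, y, by simpa using hy, hG.monitors_of_isPath hp he⟩

lemma SimpleGraph.IsAcyclic.meg_eq_card_leaves [Fintype V] {G : SimpleGraph V}
    [DecidableRel G.Adj] (hG : G.IsAcyclic) :
    meg G = (Finset.univ.filter fun w => G.degree w = 1).card :=
  meg_eq_card_of_forall_subset hG.isMEGSet_leaves fun _ hM _ hw =>
    hM.mem_of_degree_eq_one (Finset.mem_filter.mp hw).2

/-- Removing an edge `uv` of the unique cycle of a unicyclic graph: the `meg` of the
resulting tree is the number of leaves `l` of `G`, plus `1` for each endpoint of `uv`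
not having degree at least `3`. -/
theorem unicyclic_deleteCycleEdge_meg [Fintype V] [DecidableEq V] (G : SimpleGraph V)
    [DecidableRel G.Adj] (hconn : G.Connected)
    (hunicyclic : G.edgeFinset.card = Fintype.card V)
    (x : V) (c : G.Walk x x) (hc : c.IsCycle)
    (u v : V) (huv : G.Adj u v) (he : s(u, v) ∈ c.edges) :
    meg (G.deleteEdges {s(u, v)}) =
      (Finset.univ.filter (fun w => G.degree w = 1)).card
        + (if 3 ≤ G.degree u then 0 else 1)
        + (if 3 ≤ G.degree v then 0 else 1) := by
  have hcard : Nat.card G.edgeSet = Nat.card V := by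
    rw [Nat.card_eq_fintype_card, ← edgeFinset_card, hunicyclic, Nat.card_eq_fintype_card]
  have hT := hconn.isTree_deleteEdges_of_mem_edges_isCycle hcard hc he
  have : Nontrivial V := ⟨u, v, huv.ne⟩
  have hu := hT.connected.preconnected.degree_pos_of_nontrivial u
  have hv := hT.connected.preconnected.degree_pos_of_nontrivial v
  rw [degree_deleteEdges_singleton_left huv] at hu
  rw [degree_deleteEdges_singleton_right huv] at hv
  rw [hT.isAcyclic.meg_eq_card_leaves, card_leaves_deleteEdges huv (by omega) (by omega)]
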